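/- arXiv:2311.04965 — 3 statements merged into one kernel-verified Lean document; each statement's English description precedes it below -/
import Mathlib

section
/- Let n ≥ 1 and let ν_n be the product of n independent copies of the normalized Haar probability measure on U(2). Then for all 2ⁿ×2ⁿ complex matrices A, B, ρ, and independent locally Haar-random encodings V = (V₁,…,V_n) and W = (W₁,…,W_n), ∫∫ tr((⊗V)* A (⊗V) ρ (⊗W)* B (⊗W) ρ) dν_n(V) dν_n(W) = tr(A) · tr(B) · tr(ρ²) / 2^{2n}. In particular, if tr(A_λ) = 0 for matrices A₁,…,A_Λ, then the mean of Σ_λ tr((⊗V)* A_λ (⊗V) ρ (⊗W)* A_λ (⊗W) ρ) over ν_n × ν_n is zero. -/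
/-!
Left invariance of Haar measure on `U(d)` under diagonal sign matrices and permutation matrices,
together with orthonormality of the columns of a unitary, gives the first moments
`∫ conj (U p q) * U r s dμ = δ_pr δ_qs / d`. Expanding the entries of `(⊗V)* A (⊗V)` and using
independence of the factors, the entrywise mean of the local twirl is `tr A / 2ⁿ • 1`. The
trace in the theorem is bilinear in the two twirls, which are independent, so by Fubini its mean
is `tr ((tr A / 2ⁿ) • ρ * (tr B / 2ⁿ) • ρ)`.
-/

open MeasureTheory Matrix ComplexConjugate

/-- The `2ⁿ × 2ⁿ` Kronecker product `W₁ ⊗ ⋯ ⊗ W_n` of `n` unitaries on `ℂ²`, indexed by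
bit strings, with entries `(⊗W)(j,k) = ∏ᵢ Wᵢ(jᵢ, kᵢ)`. -/
def tensorProd {n : ℕ} (W : Fin n → Matrix.unitaryGroup (Fin 2) ℂ) :
    Matrix (Fin n → Fin 2) (Fin n → Fin 2) ℂ :=
  Matrix.of fun j k => ∏ i, (W i : Matrix (Fin 2) (Fin 2) ℂ) (j i) (k i)

namespace Matrix

variable {ι α : Type*} [Fintype ι] [DecidableEq ι]

lemma diagonal_mem_unitaryGroup [CommRing α] [StarRing α] {d : ι → α}
    (hd : ∀ i, star (d i) * d i = 1) : diagonal d ∈ unitaryGroup ι α := by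
  rw [mem_unitaryGroup_iff', star_eq_conjTranspose, diagonal_conjTranspose,
    diagonal_mul_diagonal]
  exact diagonal_eq_one.mpr (funext hd)

lemma permMatrix_mem_unitaryGroup [CommRing α] [StarRing α] (σ : Equiv.Perm ι) :
    σ.permMatrix α ∈ unitaryGroup ι α := by
  rw [mem_unitaryGroup_iff', star_eq_conjTranspose, conjTranspose_permMatrix,
    ← permMatrix_mul, mul_inv_cancel, permMatrix_one]

end Matrix

section HaarMoments

variable {ι : Type*} [Fintype ι] [DecidableEq ι] [MeasurableSpace (unitaryGroup ι ℂ)]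
  [BorelSpace (unitaryGroup ι ℂ)] (μ : Measure (unitaryGroup ι ℂ))

lemma integrable_conj_apply_mul_apply [IsFiniteMeasure μ] (p q r s : ι) :
    Integrable (fun U : unitaryGroup ι ℂ => conj (U p q) * U r s) μ := by
  refine .of_bound (Continuous.aestronglyMeasurable ?_) 1 (.of_forall fun U => ?_)
  · exact (Complex.continuous_conj.comp (continuous_subtype_val.matrix_elem p q)).mul
      (continuous_subtype_val.matrix_elem r s)
  · rw [norm_mul, RCLike.norm_conj]
    exact mul_le_one₀ (entry_norm_bound_of_unitary U.2 p q) (norm_nonneg _)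
      (entry_norm_bound_of_unitary U.2 r s)

lemma sum_integral_conj_apply_mul_apply [IsProbabilityMeasure μ] (q s : ι) :
    ∑ p, ∫ U : unitaryGroup ι ℂ, conj (U p q) * U p s ∂μ = (1 : Matrix ι ι ℂ) q s := by
  rw [← integral_finsetSum _ fun p _ => integrable_conj_apply_mul_apply μ p q p s]
  have hcolumns (U : unitaryGroup ι ℂ) : ∑ p, conj (U p q) * U p s = (1 : Matrix ι ι ℂ) q s := by
    rw [← UnitaryGroup.star_mul_self U, mul_apply]
    simp
  simp [hcolumns]

variable [μ.IsMulLeftInvariant]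

lemma integral_conj_apply_mul_apply_eq_zero_of_ne {p r : ι} (hpr : p ≠ r) (q s : ι) :
    ∫ U : unitaryGroup ι ℂ, conj (U p q) * U r s ∂μ = 0 := by
  let g : unitaryGroup ι ℂ :=
    ⟨diagonal fun i => if i = p then -1 else 1, diagonal_mem_unitaryGroup fun i => by
      split_ifs <;> simp⟩
  have hg (U : unitaryGroup ι ℂ) (i j : ι) :
      (g * U) i j = (if i = p then -1 else 1) * U i j := by
    simp [g, diagonal_mul]
  have hinv :=
    integral_mul_left_eq_self (μ := μ) (fun U : unitaryGroup ι ℂ => conj (U p q) * U r s) g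
  simp only [hg, if_true, if_neg hpr.symm, one_mul, map_neg, neg_mul, integral_neg] at hinv
  exact neg_eq_self.mp hinv

lemma integral_conj_apply_mul_apply_perm (σ : Equiv.Perm ι) (p q r s : ι) :
    ∫ U : unitaryGroup ι ℂ, conj (U (σ p) q) * U (σ r) s ∂μ =
      ∫ U : unitaryGroup ι ℂ, conj (U p q) * U r s ∂μ := by
  let g : unitaryGroup ι ℂ := ⟨σ.permMatrix ℂ, permMatrix_mem_unitaryGroup σ⟩
  have hg (U : unitaryGroup ι ℂ) (i j : ι) : (g * U) i j = U (σ i) j := by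
    simp [g, PEquiv.toMatrix_toPEquiv_mul]
  simpa only [hg] using
    integral_mul_left_eq_self (μ := μ) (fun U : unitaryGroup ι ℂ => conj (U p q) * U r s) g

theorem integral_conj_apply_mul_apply [IsProbabilityMeasure μ] (p q r s : ι) :
    ∫ U : unitaryGroup ι ℂ, conj (U p q) * U r s ∂μ =
      if p = r ∧ q = s then (Fintype.card ι : ℂ)⁻¹ else 0 := by
  by_cases hpr : p = r
  swap
  · rw [integral_conj_apply_mul_apply_eq_zero_of_ne μ hpr, if_neg (hpr ·.1)]
  subst hpr
  have hsum := sum_integral_conj_apply_mul_apply μ q s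
  have hconst (p' : ι) : ∫ U : unitaryGroup ι ℂ, conj (U p' q) * U p' s ∂μ =
      ∫ U : unitaryGroup ι ℂ, conj (U p q) * U p s ∂μ := by
    simpa using integral_conj_apply_mul_apply_perm μ (Equiv.swap p p') p q p s
  rw [Finset.sum_congr rfl fun p' _ => hconst p', Finset.sum_const, Finset.card_univ,
    nsmul_eq_mul] at hsum
  have hcard : (Fintype.card ι : ℂ) ≠ 0 :=
    Nat.cast_ne_zero.mpr (Fintype.card_pos_iff.mpr ⟨p⟩).ne'
  rw [eq_inv_mul_iff_mul_eq₀ hcard |>.mpr hsum]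
  simp [one_apply]

lemma integral_pi_prod_conj_apply_mul_apply {κ : Type*} [Fintype κ] [IsProbabilityMeasure μ]
    (a j b c : κ → ι) :
    ∫ V : κ → unitaryGroup ι ℂ, ∏ k, conj (V k (a k) (j k)) * V k (b k) (c k)
        ∂(Measure.pi fun _ => μ) =
      if a = b ∧ j = c then ((Fintype.card ι : ℂ) ^ Fintype.card κ)⁻¹ else 0 := by
  rw [integral_fintype_prod_eq_prod
    (fun k (U : unitaryGroup ι ℂ) => conj (U (a k) (j k)) * U (b k) (c k))]
  simp [integral_conj_apply_mul_apply, Finset.prod_ite_zero, forall_and, funext_iff]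

end HaarMoments

section EntrywiseIntegral

variable {α β I : Type*} [MeasurableSpace α] [MeasurableSpace β] [Fintype I]
  {μ : Measure α} {ν : Measure β} {X : α → Matrix I I ℂ} {Y : β → Matrix I I ℂ}

lemma integrable_mul_apply (hX : ∀ i j, Integrable (fun a => X a i j) μ) (ρ : Matrix I I ℂ)
    (i k : I) : Integrable (fun a => (X a * ρ) i k) μ := by
  simp only [mul_apply]
  exact integrable_finsetSum _ fun c _ => (hX i c).mul_const _

lemma integral_mul_apply (hX : ∀ i j, Integrable (fun a => X a i j) μ) (ρ : Matrix I I ℂ)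
    (i k : I) : ∫ a, (X a * ρ) i k ∂μ = ((of fun i j => ∫ a, X a i j ∂μ) * ρ) i k := by
  simp only [mul_apply, of_apply]
  rw [integral_finsetSum _ fun c _ => (hX i c).mul_const _]
  simp only [integral_mul_const]

lemma integrable_trace_mul_prod (hX : ∀ i j, Integrable (fun a => X a i j) μ)
    (hY : ∀ i j, Integrable (fun b => Y b i j) ν) (ρ σ : Matrix I I ℂ) :
    Integrable (fun z : α × β => trace (X z.1 * ρ * (Y z.2 * σ))) (μ.prod ν) := by
  simp only [trace, diag, mul_apply (M := X _ * ρ)]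
  exact integrable_finsetSum _ fun i _ => integrable_finsetSum _ fun k _ =>
    (integrable_mul_apply hX ρ i k).mul_prod (integrable_mul_apply hY σ k i)

lemma integral_trace_mul_prod [SFinite μ] [SFinite ν]
    (hX : ∀ i j, Integrable (fun a => X a i j) μ) (hY : ∀ i j, Integrable (fun b => Y b i j) ν)
    (ρ σ : Matrix I I ℂ) :
    ∫ z : α × β, trace (X z.1 * ρ * (Y z.2 * σ)) ∂μ.prod ν =
      trace ((of fun i j => ∫ a, X a i j ∂μ) * ρ * ((of fun i j => ∫ b, Y b i j ∂ν) * σ)) := by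
  have hintegrable (i k : I) : Integrable (fun z : α × β => (X z.1 * ρ) i k * (Y z.2 * σ) k i)
      (μ.prod ν) :=
    (integrable_mul_apply hX ρ i k).mul_prod (integrable_mul_apply hY σ k i)
  simp only [trace, diag, mul_apply (M := _ * ρ)]
  rw [integral_finsetSum _ fun i _ => integrable_finsetSum _ fun k _ => hintegrable i k]
  refine Finset.sum_congr rfl fun i _ => ?_
  rw [integral_finsetSum _ fun k _ => hintegrable i k]
  refine Finset.sum_congr rfl fun k _ => ?_
  rw [integral_prod_mul (fun a => (X a * ρ) i k) (fun b => (Y b * σ) k i),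
    integral_mul_apply hX, integral_mul_apply hY]

end EntrywiseIntegral

section LocalTwirl

variable {n : ℕ}

lemma conjTranspose_tensorProd_mul_mul_tensorProd_apply (V : Fin n → unitaryGroup (Fin 2) ℂ)
    (A : Matrix (Fin n → Fin 2) (Fin n → Fin 2) ℂ) (j c : Fin n → Fin 2) :
    ((tensorProd V)ᴴ * A * tensorProd V) j c =
      ∑ a, ∑ b, A a b * ∏ i, conj (V i (a i) (j i)) * V i (b i) (c i) := by
  simp only [mul_apply, conjTranspose_apply, tensorProd, of_apply, Finset.sum_mul]
  rw [Finset.sum_comm]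
  refine Finset.sum_congr rfl fun a _ => Finset.sum_congr rfl fun b _ => ?_
  rw [Finset.prod_mul_distrib, star_prod]
  simp only [starRingEnd_apply]
  ring

variable [MeasurableSpace (unitaryGroup (Fin 2) ℂ)] [BorelSpace (unitaryGroup (Fin 2) ℂ)]
  (μ : Measure (unitaryGroup (Fin 2) ℂ))

lemma integrable_conjTranspose_tensorProd_mul_mul_tensorProd_apply [IsFiniteMeasure μ]
    (A : Matrix (Fin n → Fin 2) (Fin n → Fin 2) ℂ) (j c : Fin n → Fin 2) :
    Integrable (fun V : Fin n → unitaryGroup (Fin 2) ℂ => ((tensorProd V)ᴴ * A * tensorProd V) j c)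
      (Measure.pi fun _ => μ) := by
  simp only [conjTranspose_tensorProd_mul_mul_tensorProd_apply]
  exact integrable_finsetSum _ fun a _ => integrable_finsetSum _ fun b _ =>
    (Integrable.fintype_prod fun i => integrable_conj_apply_mul_apply μ _ _ _ _).const_mul _

lemma integral_conjTranspose_tensorProd_mul_mul_tensorProd [μ.IsMulLeftInvariant]
    [IsProbabilityMeasure μ] (A : Matrix (Fin n → Fin 2) (Fin n → Fin 2) ℂ) :
    (of fun j c => ∫ V : Fin n → unitaryGroup (Fin 2) ℂ, ((tensorProd V)ᴴ * A * tensorProd V) j c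
        ∂(Measure.pi fun _ => μ)) = (trace A / 2 ^ n) • 1 := by
  ext j c
  have hprod (a b : Fin n → Fin 2) :
      Integrable (fun V : Fin n → unitaryGroup (Fin 2) ℂ =>
        A a b * ∏ i, conj (V i (a i) (j i)) * V i (b i) (c i)) (Measure.pi fun _ => μ) :=
    (Integrable.fintype_prod fun i => integrable_conj_apply_mul_apply μ _ _ _ _).const_mul _
  simp only [of_apply, conjTranspose_tensorProd_mul_mul_tensorProd_apply]
  rw [integral_finsetSum _ fun a _ => integrable_finsetSum _ fun b _ => hprod a b]
  have hinner (a : Fin n → Fin 2) := integral_finsetSum Finset.univ fun b _ => hprod a b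
  simp only [hinner, integral_const_mul, integral_pi_prod_conj_apply_mul_apply]
  by_cases hjc : j = c <;> simp [hjc, trace, one_apply, div_eq_mul_inv, Finset.sum_mul]

end LocalTwirl

theorem local_haar_double_twirl_trace_general (n : ℕ)
    [MeasurableSpace (Matrix.unitaryGroup (Fin 2) ℂ)]
    [BorelSpace (Matrix.unitaryGroup (Fin 2) ℂ)]
    (μ : Measure (Matrix.unitaryGroup (Fin 2) ℂ))
    [μ.IsHaarMeasure] [IsProbabilityMeasure μ] :
    (∀ A B ρ : Matrix (Fin n → Fin 2) (Fin n → Fin 2) ℂ,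
        ∫ p : (Fin n → Matrix.unitaryGroup (Fin 2) ℂ) × (Fin n → Matrix.unitaryGroup (Fin 2) ℂ),
            Matrix.trace
              ((tensorProd p.1)ᴴ * A * tensorProd p.1 * ρ *
                (tensorProd p.2)ᴴ * B * tensorProd p.2 * ρ)
          ∂((Measure.pi fun _ => μ).prod (Measure.pi fun _ => μ))
          = Matrix.trace A * Matrix.trace B * Matrix.trace (ρ * ρ) / (2 : ℂ) ^ (2 * n)) ∧
      ∀ (ρ : Matrix (Fin n → Fin 2) (Fin n → Fin 2) ℂ) (Λ : ℕ)
        (A : Fin Λ → Matrix (Fin n → Fin 2) (Fin n → Fin 2) ℂ),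
        (∀ lam, Matrix.trace (A lam) = 0) →
        ∫ p : (Fin n → Matrix.unitaryGroup (Fin 2) ℂ) × (Fin n → Matrix.unitaryGroup (Fin 2) ℂ),
            ∑ lam : Fin Λ,
              Matrix.trace
                ((tensorProd p.1)ᴴ * A lam * tensorProd p.1 * ρ *
                  (tensorProd p.2)ᴴ * A lam * tensorProd p.2 * ρ)
          ∂((Measure.pi fun _ => μ).prod (Measure.pi fun _ => μ))
          = 0 := by
  have hassoc (V W : Fin n → unitaryGroup (Fin 2) ℂ)
      (A B ρ : Matrix (Fin n → Fin 2) (Fin n → Fin 2) ℂ) :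
      (tensorProd V)ᴴ * A * tensorProd V * ρ * (tensorProd W)ᴴ * B * tensorProd W * ρ =
        (tensorProd V)ᴴ * A * tensorProd V * ρ * ((tensorProd W)ᴴ * B * tensorProd W * ρ) := by
    simp only [Matrix.mul_assoc]
  have hintegrable := integrable_conjTranspose_tensorProd_mul_mul_tensorProd_apply (n := n) μ
  have hmean (A B ρ : Matrix (Fin n → Fin 2) (Fin n → Fin 2) ℂ) :
      ∫ p : (Fin n → unitaryGroup (Fin 2) ℂ) × (Fin n → unitaryGroup (Fin 2) ℂ),
          trace ((tensorProd p.1)ᴴ * A * tensorProd p.1 * ρ *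
            (tensorProd p.2)ᴴ * B * tensorProd p.2 * ρ)
        ∂((Measure.pi fun _ => μ).prod (Measure.pi fun _ => μ)) =
        trace A * trace B * trace (ρ * ρ) / 2 ^ (2 * n) := by
    simp only [hassoc]
    rw [integral_trace_mul_prod (hintegrable A) (hintegrable B),
      integral_conjTranspose_tensorProd_mul_mul_tensorProd,
      integral_conjTranspose_tensorProd_mul_mul_tensorProd]
    simp only [smul_mul, Matrix.mul_smul, one_mul, trace_smul, smul_eq_mul, pow_mul']
    ring
  refine ⟨hmean, fun ρ Λ A hA => ?_⟩
  rw [integral_finsetSum _ fun l _ => by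
    simpa only [hassoc] using integrable_trace_mul_prod (hintegrable (A l)) (hintegrable (A l)) ρ ρ]
  simp [hmean, hA]

/-- **Mean of the doubly locally-twirled trace.**
For independent locally Haar-random encodings `V, W`,
`∫∫ tr((⊗V)* A (⊗V) ρ (⊗W)* B (⊗W) ρ) = tr(A) tr(B) tr(ρ²) / 2^{2n}`; in particular,
if all `A_λ` are traceless, the mean of `Σ_λ tr((⊗V)* A_λ (⊗V) ρ (⊗W)* A_λ (⊗W) ρ)` is zero. -/
theorem local_haar_double_twirl_trace (n : ℕ) (hn : 1 ≤ n)
    [MeasurableSpace (Matrix.unitaryGroup (Fin 2) ℂ)]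
    [BorelSpace (Matrix.unitaryGroup (Fin 2) ℂ)]
    (μ : Measure (Matrix.unitaryGroup (Fin 2) ℂ))
    [μ.IsHaarMeasure] [IsProbabilityMeasure μ] :
    (∀ A B ρ : Matrix (Fin n → Fin 2) (Fin n → Fin 2) ℂ,
        ∫ p : (Fin n → Matrix.unitaryGroup (Fin 2) ℂ) × (Fin n → Matrix.unitaryGroup (Fin 2) ℂ),
            Matrix.trace
              ((tensorProd p.1)ᴴ * A * tensorProd p.1 * ρ *
                (tensorProd p.2)ᴴ * B * tensorProd p.2 * ρ)
          ∂((Measure.pi fun _ => μ).prod (Measure.pi fun _ => μ))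
          = Matrix.trace A * Matrix.trace B * Matrix.trace (ρ * ρ) / (2 : ℂ) ^ (2 * n)) ∧
      ∀ (ρ : Matrix (Fin n → Fin 2) (Fin n → Fin 2) ℂ) (Λ : ℕ)
        (A : Fin Λ → Matrix (Fin n → Fin 2) (Fin n → Fin 2) ℂ),
        (∀ lam, Matrix.trace (A lam) = 0) →
        ∫ p : (Fin n → Matrix.unitaryGroup (Fin 2) ℂ) × (Fin n → Matrix.unitaryGroup (Fin 2) ℂ),
            ∑ lam : Fin Λ,
              Matrix.trace
                ((tensorProd p.1)ᴴ * A lam * tensorProd p.1 * ρ *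
                  (tensorProd p.2)ᴴ * A lam * tensorProd p.2 * ρ)
          ∂((Measure.pi fun _ => μ).prod (Measure.pi fun _ => μ))
          = 0 :=
  local_haar_double_twirl_trace_general n μ
end

section
/- Let n ≥ 1, let ν_n be the product of n independent copies of the normalized Haar probability measure on U(2), and let M be any 4ⁿ×4ⁿ complex matrix (indexed by pairs of bit strings in {0,1}ⁿ × {0,1}ⁿ). Let e₀ ∈ ℂ^{2ⁿ} be the computational basis vector indexed by the all-zeros bit string and E₀ := e₀ ⊗ e₀. Then ∫ E₀* · ((⊗W) ⊗ (⊗W))* M ((⊗W) ⊗ (⊗W)) · E₀ dν_n(W) = 6⁻ⁿ · tr(P M), where P is the 4ⁿ×4ⁿ matrix with entries P((a,b),(c,d)) = ∏_{i=1}^n (δ_{a_i c_i} δ_{b_i d_i} + δ_{a_i d_i} δ_{b_i c_i}). -/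
open MeasureTheory Matrix Kronecker

/-- The `4ⁿ × 4ⁿ` matrix `P = ⊗ᵢ (I + SWAPᵢ)`, with entries
`P((a,b),(c,d)) = ∏ᵢ (δ_{aᵢcᵢ} δ_{bᵢdᵢ} + δ_{aᵢdᵢ} δ_{bᵢcᵢ})`. -/
def swapSum (n : ℕ) :
    Matrix ((Fin n → Fin 2) × (Fin n → Fin 2)) ((Fin n → Fin 2) × (Fin n → Fin 2)) ℂ :=
  Matrix.of fun p q => ∏ i,
    ((if p.1 i = q.1 i then (1 : ℂ) else 0) * (if p.2 i = q.2 i then (1 : ℂ) else 0) +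
      (if p.1 i = q.2 i then (1 : ℂ) else 0) * (if p.2 i = q.1 i then (1 : ℂ) else 0))

/-- The computational all-zeros basis vector `e₀ ∈ ℂ^{2ⁿ}`. -/
def eZero (n : ℕ) : (Fin n → Fin 2) → ℂ := fun j => if j = fun _ => 0 then 1 else 0

/-!
With `uᵢ = Wᵢ e₀` the first column of `Wᵢ`, the vector `ψ = ((⊗W) ⊗ (⊗W)) E₀` has entries
`ψ (j, k) = ∏ᵢ uᵢ(jᵢ) uᵢ(kᵢ)`, so `ψ* M ψ = ∑ M p q conj(ψ p) ψ q` is a combination of products over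
the qubits of monomials `conj(u_a) conj(u_b) u_c u_d`. By independence such a product integrates to
the product of the one-qubit moments, and these are `(δ_ca δ_db + δ_cb δ_da) / 6`: invariance of
Haar measure under `diag(i, 1)` kills the moments whose two index pairs contain different numbers of
zeros, invariance under real rotations gives `E|u₀|⁴ = E|u₁|⁴ = 2 E|u₀|²|u₁|²`, and
`(|u₀|² + |u₁|²)² = 1` fixes the normalisation. The product of the one-qubit moments is
`P q p / 6ⁿ`, and summing against `M p q` gives `tr(P M) / 6ⁿ`.
-/

open ComplexConjugate

noncomputable def colMonomial (a b c d : Fin 2) (U : unitaryGroup (Fin 2) ℂ) : ℂ :=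
  conj (U a 0) * conj (U b 0) * (U c 0 * U d 0)

theorem continuous_colMonomial (a b c d : Fin 2) : Continuous (colMonomial a b c d) := by
  have h (i : Fin 2) : Continuous fun U : unitaryGroup (Fin 2) ℂ => U i 0 :=
    (continuous_apply_apply i 0).comp continuous_subtype_val
  exact ((Complex.continuous_conj.comp (h a)).mul (Complex.continuous_conj.comp (h b))).mul
    ((h c).mul (h d))

theorem norm_colMonomial_le_one (a b c d : Fin 2) (U : unitaryGroup (Fin 2) ℂ) :
    ‖colMonomial a b c d U‖ ≤ 1 := by
  have h (i : Fin 2) : ‖U i 0‖ ≤ 1 := entry_norm_bound_of_unitary U.2 i 0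
  simp only [colMonomial, norm_mul, RCLike.norm_conj]
  exact mul_le_one₀ (mul_le_one₀ (h a) (norm_nonneg _) (h b)) (by positivity)
    (mul_le_one₀ (h c) (norm_nonneg _) (h d))

theorem colMonomial_mul (V U : unitaryGroup (Fin 2) ℂ) (a b c d : Fin 2) :
    colMonomial a b c d (V * U) = ∑ t : Fin 2 × Fin 2 × Fin 2 × Fin 2,
      conj (V a t.1) * conj (V b t.2.1) * (V c t.2.2.1 * V d t.2.2.2) *
        colMonomial t.1 t.2.1 t.2.2.1 t.2.2.2 U := by
  simp only [colMonomial, UnitaryGroup.mul_apply, Matrix.mul_apply, Fin.sum_univ_two,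
    Fintype.sum_prod_type, map_add, map_mul]
  ring

theorem sum_colMonomial_eq_one (U : unitaryGroup (Fin 2) ℂ) :
    ∑ p : Fin 2 × Fin 2, colMonomial p.1 p.2 p.1 p.2 U = 1 := by
  have h : ∑ a, conj (U a 0) * U a 0 = 1 := by
    simpa [Matrix.mul_apply] using congrFun (congrFun (UnitaryGroup.star_mul_self U) 0) 0
  simp only [Fin.sum_univ_two, Fintype.sum_prod_type, colMonomial] at h ⊢
  linear_combination (conj (U 0 0) * U 0 0 + conj (U 1 0) * U 1 0 + 1) * h

theorem colMonomial_diagonal_mul (φ : Fin 2 → ℂ) (hφ : diagonal φ ∈ unitaryGroup (Fin 2) ℂ)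
    (U : unitaryGroup (Fin 2) ℂ) (a b c d : Fin 2) :
    colMonomial a b c d (⟨diagonal φ, hφ⟩ * U) =
      conj (φ a) * conj (φ b) * (φ c * φ d) * colMonomial a b c d U := by
  simp only [colMonomial, UnitaryGroup.mul_apply, diagonal_mul, map_mul]
  ring

theorem diagonal_I_one_mem_unitaryGroup : diagonal ![Complex.I, 1] ∈ unitaryGroup (Fin 2) ℂ := by
  rw [mem_unitaryGroup_iff, star_eq_conjTranspose, diagonal_conjTranspose, diagonal_mul_diagonal]
  ext i j
  fin_cases i <;> fin_cases j <;> simp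

theorem rotation_mem_unitaryGroup {c s : ℝ} (h : c ^ 2 + s ^ 2 = 1) :
    !![(c : ℂ), s; -s, c] ∈ unitaryGroup (Fin 2) ℂ := by
  have h' : (c : ℂ) ^ 2 + s ^ 2 = 1 := by exact_mod_cast h
  rw [mem_unitaryGroup_iff]
  ext i j
  fin_cases i <;> fin_cases j <;> simp [Matrix.mul_apply, Fin.sum_univ_two] <;>
    first | linear_combination h' | ring

section Moments

variable [MeasurableSpace (unitaryGroup (Fin 2) ℂ)] (μ : Measure (unitaryGroup (Fin 2) ℂ))

noncomputable def colMoment (a b c d : Fin 2) : ℂ := ∫ U, colMonomial a b c d U ∂μ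

theorem colMoment_comm_left (a b c d : Fin 2) : colMoment μ a b c d = colMoment μ b a c d := by
  simp only [colMoment, colMonomial]
  congr 1 with U
  ring

theorem colMoment_comm_right (a b c d : Fin 2) : colMoment μ a b c d = colMoment μ a b d c := by
  simp only [colMoment, colMonomial]
  congr 1 with U
  ring

variable [BorelSpace (unitaryGroup (Fin 2) ℂ)]

theorem integrable_colMonomial [IsFiniteMeasure μ] (a b c d : Fin 2) :
    Integrable (colMonomial a b c d) μ :=
  .of_bound (continuous_colMonomial a b c d).aestronglyMeasurable 1
    (.of_forall (norm_colMonomial_le_one a b c d))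

theorem sum_colMoment_eq_one [IsProbabilityMeasure μ] :
    ∑ p : Fin 2 × Fin 2, colMoment μ p.1 p.2 p.1 p.2 = 1 := by
  simp_rw [colMoment]
  rw [← integral_finsetSum _ fun p _ => integrable_colMonomial μ _ _ _ _]
  simp [sum_colMonomial_eq_one]

variable [μ.IsMulLeftInvariant]

theorem colMoment_eq_zero_of_diagonal (φ : Fin 2 → ℂ) (hφ : diagonal φ ∈ unitaryGroup (Fin 2) ℂ)
    {a b c d : Fin 2} (h : conj (φ a) * conj (φ b) * (φ c * φ d) ≠ 1) :
    colMoment μ a b c d = 0 := by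
  have hfix :
      colMoment μ a b c d = conj (φ a) * conj (φ b) * (φ c * φ d) * colMoment μ a b c d := by
    calc colMoment μ a b c d = ∫ U, colMonomial a b c d (⟨diagonal φ, hφ⟩ * U) ∂μ :=
          (integral_mul_left_eq_self _ _).symm
      _ = _ := by simp_rw [colMonomial_diagonal_mul, integral_const_mul, colMoment]
  by_contra h0
  exact h (mul_right_cancel₀ h0 (by rw [← hfix, one_mul]))

theorem colMoment_eq_zero_of_count_ne {a b c d : Fin 2} (h : [a, b].count 0 ≠ [c, d].count 0) :
    colMoment μ a b c d = 0 := by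
  refine colMoment_eq_zero_of_diagonal μ _ diagonal_I_one_mem_unitaryGroup ?_
  fin_cases a <;> fin_cases b <;> fin_cases c <;> fin_cases d <;>
    simp_all [Complex.ext_iff] <;> norm_num

theorem colMoment_eq_sum_mul_left [IsFiniteMeasure μ] (V : unitaryGroup (Fin 2) ℂ)
    (a b c d : Fin 2) :
    colMoment μ a b c d = ∑ t : Fin 2 × Fin 2 × Fin 2 × Fin 2,
      conj (V a t.1) * conj (V b t.2.1) * (V c t.2.2.1 * V d t.2.2.2) *
        colMoment μ t.1 t.2.1 t.2.2.1 t.2.2.2 := by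
  rw [colMoment, ← integral_mul_left_eq_self _ V]
  simp_rw [colMonomial_mul]
  rw [integral_finsetSum _ fun t _ => (integrable_colMonomial μ _ _ _ _).const_mul _]
  simp_rw [integral_const_mul, colMoment]

theorem colMoment_rotation [IsFiniteMeasure μ] {c s : ℝ} (h : c ^ 2 + s ^ 2 = 1) :
    colMoment μ 0 0 0 0 = c ^ 4 * colMoment μ 0 0 0 0 + s ^ 4 * colMoment μ 1 1 1 1 +
      4 * c ^ 2 * s ^ 2 * colMoment μ 0 1 0 1 := by
  conv_lhs => rw [colMoment_eq_sum_mul_left μ ⟨_, rotation_mem_unitaryGroup h⟩]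
  simp (disch := decide) only [Fintype.sum_prod_type, Fin.sum_univ_two,
    colMoment_eq_zero_of_count_ne μ, mul_zero, add_zero, zero_add, colMoment_comm_right μ 0 1 1 0,
    colMoment_comm_left μ 1 0 0 1, colMoment_comm_left μ 1 0 1 0]
  simp only [of_apply, cons_val', cons_val_zero, cons_val_one, cons_val_fin_one,
    Complex.conj_ofReal]
  ring

theorem colMoment_one_one_one_one [IsFiniteMeasure μ] :
    colMoment μ 1 1 1 1 = colMoment μ 0 0 0 0 := by
  simpa using (colMoment_rotation μ (c := 0) (s := 1) (by norm_num)).symm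

theorem colMoment_zero_zero_zero_zero [IsProbabilityMeasure μ] : colMoment μ 0 0 0 0 = 1 / 3 := by
  -- a rotation with rational entries, so that no square roots appear
  have hrot := colMoment_rotation μ (c := 3 / 5) (s := 4 / 5) (by norm_num)
  have hsum := sum_colMoment_eq_one μ
  simp only [Fintype.sum_prod_type, Fin.sum_univ_two] at hsum
  rw [colMoment_comm_left μ 1 0 1 0, colMoment_comm_right μ 0 1 1 0,
    colMoment_one_one_one_one] at hsum
  rw [colMoment_one_one_one_one] at hrot
  push_cast at hrot
  linear_combination (1 / 3) * hsum + (625 / 864) * hrot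

theorem colMoment_zero_one_zero_one [IsProbabilityMeasure μ] : colMoment μ 0 1 0 1 = 1 / 6 := by
  have hsum := sum_colMoment_eq_one μ
  simp only [Fintype.sum_prod_type, Fin.sum_univ_two] at hsum
  rw [colMoment_comm_left μ 1 0 1 0, colMoment_comm_right μ 0 1 1 0, colMoment_one_one_one_one,
    colMoment_zero_zero_zero_zero] at hsum
  linear_combination hsum / 2

theorem colMoment_eq [IsProbabilityMeasure μ] (a b c d : Fin 2) :
    colMoment μ a b c d = ((if c = a then 1 else 0) * (if d = b then 1 else 0) +
      (if c = b then 1 else 0) * (if d = a then 1 else 0)) / 6 := by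
  have h0110 : colMoment μ 0 1 1 0 = 1 / 6 := by
    rw [colMoment_comm_right, colMoment_zero_one_zero_one]
  have h1001 : colMoment μ 1 0 0 1 = 1 / 6 := by
    rw [colMoment_comm_left, colMoment_zero_one_zero_one]
  have h1010 : colMoment μ 1 0 1 0 = 1 / 6 := by
    rw [colMoment_comm_left, h0110]
  fin_cases a <;> fin_cases b <;> fin_cases c <;> fin_cases d <;>
    simp [colMoment_eq_zero_of_count_ne μ, colMoment_one_one_one_one,
      colMoment_zero_zero_zero_zero, colMoment_zero_one_zero_one, h0110, h1001, h1010] <;> norm_num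

end Moments

theorem star_dotProduct_conjTranspose_mul_mul_mulVec {R m k : Type*} [NonUnitalSemiring R]
    [StarRing R] [Fintype m] [Fintype k] (A : Matrix m k R) (M : Matrix m m R) (v : k → R) :
    star v ⬝ᵥ ((Aᴴ * M * A) *ᵥ v) = star (A *ᵥ v) ⬝ᵥ (M *ᵥ (A *ᵥ v)) := by
  rw [← mulVec_mulVec, ← mulVec_mulVec, dotProduct_mulVec, ← star_mulVec]

theorem star_dotProduct_mulVec_eq_sum {R m : Type*} [CommSemiring R] [StarRing R] [Fintype m]
    (M : Matrix m m R) (x : m → R) :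
    star x ⬝ᵥ (M *ᵥ x) = ∑ t : m × m, M t.1 t.2 * (star (x t.1) * x t.2) := by
  simp only [dotProduct, mulVec, Pi.star_apply, Finset.mul_sum, Fintype.sum_prod_type]
  congr! 2 with p _ q _
  ring

theorem eZero_kronecker_eq_single (n : ℕ) :
    (fun p : (Fin n → Fin 2) × (Fin n → Fin 2) => eZero n p.1 * eZero n p.2) =
      Pi.single (0, 0) 1 := by
  ext p
  simp [eZero, Pi.single_apply, Prod.ext_iff, ← Pi.zero_def, ← ite_and, and_comm]

theorem tensorProd_kronecker_mulVec_eZero {n : ℕ} (W : Fin n → unitaryGroup (Fin 2) ℂ) :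
    (tensorProd W ⊗ₖ tensorProd W) *ᵥ (fun p => eZero n p.1 * eZero n p.2) =
      fun p => ∏ i, W i (p.1 i) 0 * W i (p.2 i) 0 := by
  ext p
  rw [eZero_kronecker_eq_single, mulVec_single_one]
  simp [tensorProd, Finset.prod_mul_distrib]

theorem star_prod_mul_prod_eq_prod_colMonomial {n : ℕ} (W : Fin n → unitaryGroup (Fin 2) ℂ)
    (p q : (Fin n → Fin 2) × (Fin n → Fin 2)) :
    star (∏ i, W i (p.1 i) 0 * W i (p.2 i) 0) * ∏ i, W i (q.1 i) 0 * W i (q.2 i) 0 =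
      ∏ i, colMonomial (p.1 i) (p.2 i) (q.1 i) (q.2 i) (W i) := by
  simp only [Complex.star_def, map_prod, map_mul, ← Finset.prod_mul_distrib, colMonomial]

section Twirl

variable [MeasurableSpace (unitaryGroup (Fin 2) ℂ)] [BorelSpace (unitaryGroup (Fin 2) ℂ)]
  (μ : Measure (unitaryGroup (Fin 2) ℂ)) [μ.IsMulLeftInvariant] [IsProbabilityMeasure μ]

theorem integral_prod_colMonomial {n : ℕ} (p q : (Fin n → Fin 2) × (Fin n → Fin 2)) :
    ∫ W, ∏ i, colMonomial (p.1 i) (p.2 i) (q.1 i) (q.2 i) (W i) ∂(Measure.pi fun _ => μ) =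
      swapSum n q p / 6 ^ n := by
  rw [integral_fintype_prod_eq_prod]
  simp_rw [← colMoment.eq_1, colMoment_eq]
  rw [Finset.prod_div_distrib, Finset.prod_const, Finset.card_univ, Fintype.card_fin]
  rfl

end Twirl

theorem local_haar_second_moment_twirl_general (n : ℕ)
    [MeasurableSpace (Matrix.unitaryGroup (Fin 2) ℂ)]
    [BorelSpace (Matrix.unitaryGroup (Fin 2) ℂ)]
    (μ : Measure (Matrix.unitaryGroup (Fin 2) ℂ))
    [μ.IsHaarMeasure] [IsProbabilityMeasure μ]
    (M : Matrix ((Fin n → Fin 2) × (Fin n → Fin 2)) ((Fin n → Fin 2) × (Fin n → Fin 2)) ℂ) :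
    ∫ W : Fin n → Matrix.unitaryGroup (Fin 2) ℂ,
        star (fun p : (Fin n → Fin 2) × (Fin n → Fin 2) => eZero n p.1 * eZero n p.2) ⬝ᵥ
          (((tensorProd W ⊗ₖ tensorProd W)ᴴ * M * (tensorProd W ⊗ₖ tensorProd W)).mulVec
            fun p : (Fin n → Fin 2) × (Fin n → Fin 2) => eZero n p.1 * eZero n p.2)
        ∂(Measure.pi fun _ => μ)
      = ((6 : ℂ) ^ n)⁻¹ * Matrix.trace (swapSum n * M) := by
  simp_rw [star_dotProduct_conjTranspose_mul_mul_mulVec, tensorProd_kronecker_mulVec_eZero,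
    star_dotProduct_mulVec_eq_sum, star_prod_mul_prod_eq_prod_colMonomial]
  rw [integral_finsetSum _ fun t _ =>
    (Integrable.fintype_prod fun i => integrable_colMonomial μ _ _ _ _).const_mul _]
  simp_rw [integral_const_mul, integral_prod_colMonomial]
  rw [Fintype.sum_prod_type, Finset.sum_comm]
  simp only [trace, diag, mul_apply, Finset.mul_sum]
  refine Finset.sum_congr rfl fun q _ => Finset.sum_congr rfl fun p _ => ?_
  ring

/-- **Second-moment local twirl against the all-zeros state.**
For a tuple `W` of independent Haar-random unitaries on `ℂ²` and any `4ⁿ × 4ⁿ` matrix `M`,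
`∫ E₀* ((⊗W) ⊗ (⊗W))* M ((⊗W) ⊗ (⊗W)) E₀ = 6⁻ⁿ tr(P M)` where `E₀ = e₀ ⊗ e₀`. -/
theorem local_haar_second_moment_twirl (n : ℕ) (hn : 1 ≤ n)
    [MeasurableSpace (Matrix.unitaryGroup (Fin 2) ℂ)]
    [BorelSpace (Matrix.unitaryGroup (Fin 2) ℂ)]
    (μ : Measure (Matrix.unitaryGroup (Fin 2) ℂ))
    [μ.IsHaarMeasure] [IsProbabilityMeasure μ]
    (M : Matrix ((Fin n → Fin 2) × (Fin n → Fin 2)) ((Fin n → Fin 2) × (Fin n → Fin 2)) ℂ) :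
    ∫ W : Fin n → Matrix.unitaryGroup (Fin 2) ℂ,
        star (fun p : (Fin n → Fin 2) × (Fin n → Fin 2) => eZero n p.1 * eZero n p.2) ⬝ᵥ
          (((tensorProd W ⊗ₖ tensorProd W)ᴴ * M * (tensorProd W ⊗ₖ tensorProd W)).mulVec
            fun p : (Fin n → Fin 2) × (Fin n → Fin 2) => eZero n p.1 * eZero n p.2)
        ∂(Measure.pi fun _ => μ)
      = ((6 : ℂ) ^ n)⁻¹ * Matrix.trace (swapSum n * M) :=
  local_haar_second_moment_twirl_general n μ M
end

section
/- Let n ≥ 1 and let A, B be 2ⁿ×2ⁿ Hermitian complex matrices. Let P be the 4ⁿ×4ⁿ matrix with entries P((a,b),(c,d)) = ∏_{i=1}^n (δ_{a_i c_i} δ_{b_i d_i} + δ_{a_i d_i} δ_{b_i c_i}). Then tr(P (A ⊗ B)) is real and satisfies (tr(P (A ⊗ B)))² ≤ 9ⁿ · tr(A²) · tr(B²). Moreover tr(P (A² ⊗ I)) = 3ⁿ tr(A²) and tr(P (I ⊗ B²)) = 3ⁿ tr(B²). -/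
open Matrix Kronecker ComplexOrder

/-!
Expanding every factor `I + SWAPᵢ` writes `P` as the sum, over the sets `t` of qubits, of the
permutation that exchanges the two tensor copies on the qubits outside `t`. Paired with `A ⊗ B`,
that permutation gives `tr (A_t B_t)`, where `A_t` is the partial trace of `A` over the qubits
in `t`. For Hermitian `A` and `B` this number is real, and by Cauchy–Schwarz it is at most
`‖A_t‖ ‖B_t‖ ≤ 2^|t| ‖A‖ ‖B‖` in Frobenius norm, because tracing out `|t|` qubits multiplies the
squared Frobenius norm by at most `2^|t|`. Since `∑_t 2^|t| = 3ⁿ` and `tr (A²) = ‖A‖²`, the bound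
follows. The identities hold because `I_t = 2^|t| I` and partial traces preserve the trace.
-/

attribute [local instance] Matrix.frobeniusSeminormedAddCommGroup

theorem Finset.piecewise_piEquivPiSubtypeProd_symm {ι α : Type*} [DecidableEq ι] (t : Finset ι)
    (w w' : {i // i ∈ t} → α) (x y : {i // i ∉ t} → α) :
    t.piecewise ((Equiv.piEquivPiSubtypeProd (· ∈ t) fun _ => α).symm (w, y))
      ((Equiv.piEquivPiSubtypeProd (· ∈ t) fun _ => α).symm (w', x)) =
      (Equiv.piEquivPiSubtypeProd (· ∈ t) fun _ => α).symm (w, x) := by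
  ext i
  by_cases h : i ∈ t <;> simp [Equiv.piEquivPiSubtypeProd, Finset.piecewise, h]

theorem Complex.sq_eq_norm_sq_of_im_eq_zero {z : ℂ} (hz : z.im = 0) :
    z ^ 2 = ((‖z‖ ^ 2 : ℝ) : ℂ) := by
  obtain ⟨r, rfl⟩ : ∃ r : ℝ, z = r := ⟨z.re, Complex.ext rfl (by simpa using hz)⟩
  rw [Complex.norm_real, Real.norm_eq_abs, sq_abs, Complex.ofReal_pow]

namespace Matrix

section Frobenius

variable {m n α : Type*} [Fintype m] [Fintype n]

theorem frobenius_norm_sq [SeminormedAddCommGroup α] (A : Matrix m n α) :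
    ‖A‖ ^ 2 = ∑ i, ∑ j, ‖A i j‖ ^ 2 := by
  rw [frobenius_norm_def, ← Real.rpow_natCast, ← Real.rpow_mul (by positivity)]
  norm_num

theorem frobenius_norm_submatrix_equiv [SeminormedAddCommGroup α] {m' n' : Type*} [Fintype m']
    [Fintype n'] (A : Matrix m n α) (e : m' ≃ m) (f : n' ≃ n) :
    ‖A.submatrix e f‖ = ‖A‖ := by
  simp only [frobenius_norm_def, submatrix_apply]
  rw [← e.sum_comp]
  simp_rw [← f.sum_comp]

theorem norm_trace_mul_le [NonUnitalSeminormedRing α] (U : Matrix m n α) (V : Matrix n m α) :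
    ‖(U * V).trace‖ ≤ ‖U‖ * ‖V‖ := by
  have hcs := Real.sum_mul_le_sqrt_mul_sqrt (Finset.univ : Finset (m × n))
    (fun p => ‖U p.1 p.2‖) (fun p => ‖V p.2 p.1‖)
  calc ‖(U * V).trace‖ ≤ ∑ i, ∑ j, ‖U i j‖ * ‖V j i‖ := by
        simp only [trace, diag_apply, mul_apply]
        refine (norm_sum_le _ _).trans (Finset.sum_le_sum fun i _ => (norm_sum_le _ _).trans ?_)
        exact Finset.sum_le_sum fun j _ => norm_mul_le _ _
    _ ≤ ‖U‖ * ‖Vᵀ‖ := by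
        simpa [Fintype.sum_prod_type, frobenius_norm_def, Real.sqrt_eq_rpow] using hcs
    _ = ‖U‖ * ‖V‖ := by rw [frobenius_norm_transpose]

theorem IsHermitian.trace_mul_im {U V : Matrix n n ℂ} (hU : U.IsHermitian) (hV : V.IsHermitian) :
    (U * V).trace.im = 0 := by
  rw [← Complex.conj_eq_iff_im, ← Complex.star_def, ← trace_conjTranspose, conjTranspose_mul,
    hU.eq, hV.eq, trace_mul_comm]

theorem IsHermitian.trace_sq [DecidableEq n] {A : Matrix n n ℂ} (hA : A.IsHermitian) :
    (A ^ 2).trace = ((‖A‖ ^ 2 : ℝ) : ℂ) := by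
  rw [pow_two]
  nth_rw 1 [← hA.eq]
  simp only [frobenius_norm_sq, trace, diag_apply, mul_apply, conjTranspose_apply]
  push_cast
  rw [Finset.sum_comm]
  simp [Complex.conj_mul']

end Frobenius

section TraceFst

variable {W X α : Type*} [Fintype W]

def traceFst [AddCommMonoid α] (M : Matrix (W × X) (W × X) α) : Matrix X X α :=
  of fun x y => ∑ w, M (w, x) (w, y)

theorem trace_traceFst [Fintype X] [AddCommMonoid α] (M : Matrix (W × X) (W × X) α) :
    M.traceFst.trace = M.trace := by
  simp only [trace, diag_apply, traceFst, of_apply, Fintype.sum_prod_type]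
  exact Finset.sum_comm

theorem traceFst_one [DecidableEq W] [DecidableEq X] [NonAssocSemiring α] :
    (1 : Matrix (W × X) (W × X) α).traceFst = Fintype.card W • 1 := by
  ext x y
  by_cases h : x = y <;> simp [traceFst, one_apply, h]

theorem IsHermitian.traceFst [AddCommMonoid α] [StarAddMonoid α] {M : Matrix (W × X) (W × X) α}
    (hM : M.IsHermitian) : M.traceFst.IsHermitian := by
  ext x y
  simp only [conjTranspose_apply, Matrix.traceFst, of_apply, star_sum]
  exact Finset.sum_congr rfl fun w _ => hM.apply (w, x) (w, y)

theorem frobenius_norm_traceFst_sq_le [Fintype X] [SeminormedAddCommGroup α]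
    (M : Matrix (W × X) (W × X) α) :
    ‖M.traceFst‖ ^ 2 ≤ Fintype.card W * ‖M‖ ^ 2 := by
  have hentry : ∀ x y, ‖M.traceFst x y‖ ^ 2 ≤ Fintype.card W * ∑ w, ‖M (w, x) (w, y)‖ ^ 2 :=
    fun x y => (pow_le_pow_left₀ (norm_nonneg _) (norm_sum_le _ _) 2).trans
      sq_sum_le_card_mul_sum_sq
  have hdiag : ∑ x, ∑ y, ∑ w, ‖M (w, x) (w, y)‖ ^ 2 ≤ ∑ p, ∑ q, ‖M p q‖ ^ 2 := by
    calc ∑ x, ∑ y, ∑ w, ‖M (w, x) (w, y)‖ ^ 2 = ∑ p : W × X, ∑ y, ‖M p (p.1, y)‖ ^ 2 := by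
          rw [Fintype.sum_prod_type]
          exact (Finset.sum_congr rfl fun _ _ => Finset.sum_comm).trans Finset.sum_comm
      _ ≤ ∑ p, ∑ q, ‖M p q‖ ^ 2 := by
          gcongr with p
          rw [Fintype.sum_prod_type]
          exact Finset.single_le_sum (f := fun w => ∑ y, ‖M p (w, y)‖ ^ 2)
            (fun _ _ => by positivity) (Finset.mem_univ p.1)
  calc ‖M.traceFst‖ ^ 2 ≤ ∑ x, ∑ y, Fintype.card W * ∑ w, ‖M (w, x) (w, y)‖ ^ 2 := by
        rw [frobenius_norm_sq]
        gcongr with x _ y _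
        exact hentry x y
    _ ≤ Fintype.card W * ‖M‖ ^ 2 := by
        simp_rw [← Finset.mul_sum, frobenius_norm_sq]
        gcongr

end TraceFst

section PartialTrace

variable {ι α : Type*} [DecidableEq ι] [Fintype α]

/-- The partial trace over the tensor factors indexed by `t`. -/
def partialTrace {R : Type*} [AddCommMonoid R] (t : Finset ι) (M : Matrix (ι → α) (ι → α) R) :
    Matrix ({i // i ∉ t} → α) ({i // i ∉ t} → α) R :=
  (M.submatrix (Equiv.piEquivPiSubtypeProd (· ∈ t) fun _ => α).symm
    (Equiv.piEquivPiSubtypeProd (· ∈ t) fun _ => α).symm).traceFst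

theorem IsHermitian.partialTrace {t : Finset ι} {M : Matrix (ι → α) (ι → α) ℂ}
    (hM : M.IsHermitian) : (partialTrace t M).IsHermitian :=
  (hM.submatrix _).traceFst

variable [Fintype ι]

theorem sum_piecewise_mul_eq_trace_partialTrace {R : Type*} [Semiring R]
    (t : Finset ι) (M N : Matrix (ι → α) (ι → α) R) :
    ∑ a, ∑ b, M (t.piecewise a b) a * N (t.piecewise b a) b =
      (partialTrace t M * partialTrace t N).trace := by
  simp only [← (Equiv.piEquivPiSubtypeProd (· ∈ t) fun _ => α).symm.sum_comp,
    Fintype.sum_prod_type, Finset.piecewise_piEquivPiSubtypeProd_symm, trace, diag_apply,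
    mul_apply, partialTrace, traceFst, of_apply, submatrix_apply, Finset.sum_mul_sum]
  rw [Finset.sum_comm]
  conv_rhs => rw [Finset.sum_comm]
  exact Finset.sum_congr rfl fun _ _ =>
    (Finset.sum_congr rfl fun _ _ => Finset.sum_comm).trans Finset.sum_comm

theorem trace_partialTrace {R : Type*} [AddCommMonoid R] (t : Finset ι)
    (M : Matrix (ι → α) (ι → α) R) : (partialTrace t M).trace = M.trace := by
  rw [partialTrace, trace_traceFst]
  exact (Equiv.piEquivPiSubtypeProd (· ∈ t) fun _ => α).symm.sum_comp fun p => M p p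

theorem partialTrace_one [DecidableEq α] {R : Type*} [NonAssocSemiring R] (t : Finset ι) :
    partialTrace t (1 : Matrix (ι → α) (ι → α) R) = (Fintype.card α ^ t.card) • 1 := by
  rw [partialTrace, submatrix_one_equiv, traceFst_one, Fintype.card_fun, Fintype.card_coe]

theorem trace_partialTrace_mul_partialTrace_one [DecidableEq α] {R : Type*} [Semiring R]
    (t : Finset ι) (M : Matrix (ι → α) (ι → α) R) :
    (partialTrace t M * partialTrace t 1).trace = (Fintype.card α ^ t.card : ℕ) * M.trace := by
  rw [partialTrace_one, Matrix.mul_smul, mul_one, trace_smul, trace_partialTrace, nsmul_eq_mul]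

theorem trace_partialTrace_one_mul_partialTrace [DecidableEq α] {R : Type*} [Semiring R]
    (t : Finset ι) (M : Matrix (ι → α) (ι → α) R) :
    (partialTrace t 1 * partialTrace t M).trace = (Fintype.card α ^ t.card : ℕ) * M.trace := by
  rw [partialTrace_one, Matrix.smul_mul, one_mul, trace_smul, trace_partialTrace, nsmul_eq_mul]

theorem frobenius_norm_partialTrace_sq_le {R : Type*} [SeminormedAddCommGroup R]
    (t : Finset ι) (M : Matrix (ι → α) (ι → α) R) :
    ‖partialTrace t M‖ ^ 2 ≤ Fintype.card α ^ t.card * ‖M‖ ^ 2 := by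
  have h := frobenius_norm_traceFst_sq_le
    (M.submatrix (Equiv.piEquivPiSubtypeProd (· ∈ t) fun _ => α).symm
      (Equiv.piEquivPiSubtypeProd (· ∈ t) fun _ => α).symm)
  rwa [frobenius_norm_submatrix_equiv, Fintype.card_fun, Fintype.card_coe, Nat.cast_pow] at h

theorem norm_trace_partialTrace_mul_le {R : Type*} [NonUnitalSeminormedRing R]
    (t : Finset ι) (M N : Matrix (ι → α) (ι → α) R) :
    ‖(partialTrace t M * partialTrace t N).trace‖ ≤ Fintype.card α ^ t.card * (‖M‖ * ‖N‖) := by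
  refine (norm_trace_mul_le _ _).trans (le_of_pow_le_pow_left₀ two_ne_zero (by positivity) ?_)
  calc (‖partialTrace t M‖ * ‖partialTrace t N‖) ^ 2
      = ‖partialTrace t M‖ ^ 2 * ‖partialTrace t N‖ ^ 2 := mul_pow _ _ _
    _ ≤ (Fintype.card α ^ t.card * ‖M‖ ^ 2) * (Fintype.card α ^ t.card * ‖N‖ ^ 2) :=
        mul_le_mul (frobenius_norm_partialTrace_sq_le t M) (frobenius_norm_partialTrace_sq_le t N)
          (by positivity) (by positivity)
    _ = (Fintype.card α ^ t.card * (‖M‖ * ‖N‖)) ^ 2 := by ring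

end PartialTrace

end Matrix

theorem swapSum_apply (n : ℕ) (p q : (Fin n → Fin 2) × (Fin n → Fin 2)) :
    swapSum n p q = ∑ t : Finset (Fin n),
      if q = (t.piecewise p.1 p.2, t.piecewise p.2 p.1) then 1 else 0 := by
  rw [swapSum, of_apply, Finset.prod_add, Finset.powerset_univ]
  refine Finset.sum_congr rfl fun t _ => ?_
  nth_rw 1 [← Finset.univ_inter t]
  rw [← Finset.prod_piecewise]
  trans ∏ i, if q.1 i = t.piecewise p.1 p.2 i ∧ q.2 i = t.piecewise p.2 p.1 i then 1 else 0
  · refine Finset.prod_congr rfl fun i _ => ?_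
    by_cases hi : i ∈ t <;> simp [hi] <;> split_ifs <;> grind
  · rw [Fintype.prod_boole]
    simp [Prod.ext_iff, funext_iff, forall_and]

theorem trace_swapSum_mul_kronecker (n : ℕ) (M N : Matrix (Fin n → Fin 2) (Fin n → Fin 2) ℂ) :
    (swapSum n * (M ⊗ₖ N)).trace = ∑ t, (partialTrace t M * partialTrace t N).trace := by
  simp_rw [← sum_piecewise_mul_eq_trace_partialTrace]
  simp only [trace, diag_apply, mul_apply, swapSum_apply, kroneckerMap_apply, Finset.sum_mul,
    ite_mul, one_mul, zero_mul]
  refine (Finset.sum_congr rfl fun p _ => ?_).trans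
    (Finset.sum_comm.trans (Finset.sum_congr rfl fun t _ => Fintype.sum_prod_type
      fun p => M (t.piecewise p.1 p.2) p.1 * N (t.piecewise p.2 p.1) p.2))
  rw [Finset.sum_comm]
  simp

theorem swapSum_pairing_bound_general (n : ℕ)
    (A B : Matrix (Fin n → Fin 2) (Fin n → Fin 2) ℂ)
    (hA : A.IsHermitian) (hB : B.IsHermitian) :
    (Matrix.trace (swapSum n * (A ⊗ₖ B))).im = 0 ∧
      (Matrix.trace (swapSum n * (A ⊗ₖ B))) ^ 2
        ≤ (9 : ℂ) ^ n * Matrix.trace (A ^ 2) * Matrix.trace (B ^ 2) ∧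
      Matrix.trace (swapSum n * ((A ^ 2) ⊗ₖ (1 : Matrix (Fin n → Fin 2) (Fin n → Fin 2) ℂ)))
        = (3 : ℂ) ^ n * Matrix.trace (A ^ 2) ∧
      Matrix.trace (swapSum n * ((1 : Matrix (Fin n → Fin 2) (Fin n → Fin 2) ℂ) ⊗ₖ (B ^ 2)))
        = (3 : ℂ) ^ n * Matrix.trace (B ^ 2) := by
  have hcount (R : Type) [CommSemiring R] : ∑ t : Finset (Fin n), (2 : R) ^ t.card = 3 ^ n := by
    simpa [two_add_one_eq_three] using Fin.sum_pow_mul_eq_add_pow (n := n) (2 : R) 1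
  have hreal : (swapSum n * (A ⊗ₖ B)).trace.im = 0 := by
    rw [trace_swapSum_mul_kronecker, Complex.im_sum]
    exact Finset.sum_eq_zero fun t _ => hA.partialTrace.trace_mul_im hB.partialTrace
  have hnorm : ‖(swapSum n * (A ⊗ₖ B)).trace‖ ≤ 3 ^ n * (‖A‖ * ‖B‖) := by
    rw [trace_swapSum_mul_kronecker, ← hcount ℝ, Finset.sum_mul]
    refine (norm_sum_le _ _).trans (Finset.sum_le_sum fun t _ => ?_)
    simpa using norm_trace_partialTrace_mul_le t A B
  refine ⟨hreal, ?_, ?_, ?_⟩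
  · rw [Complex.sq_eq_norm_sq_of_im_eq_zero hreal, hA.trace_sq, hB.trace_sq]
    have h : ‖(swapSum n * (A ⊗ₖ B)).trace‖ ^ 2 ≤ 9 ^ n * ‖A‖ ^ 2 * ‖B‖ ^ 2 :=
      calc _ ≤ (3 ^ n * (‖A‖ * ‖B‖)) ^ 2 := pow_le_pow_left₀ (norm_nonneg _) hnorm 2
        _ = 9 ^ n * ‖A‖ ^ 2 * ‖B‖ ^ 2 := by
          rw [show (9 : ℝ) = 3 ^ 2 by norm_num, ← pow_mul]
          ring
    exact_mod_cast h
  · simp [trace_swapSum_mul_kronecker, trace_partialTrace_mul_partialTrace_one,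
      ← Finset.sum_mul, hcount]
  · simp [trace_swapSum_mul_kronecker, trace_partialTrace_one_mul_partialTrace,
      ← Finset.sum_mul, hcount]

/-- **Cauchy–Schwarz-type bound for the `P`-pairing.**
For Hermitian `A, B`, the number `tr(P (A ⊗ B))` is real and satisfies
`(tr(P (A ⊗ B)))² ≤ 9ⁿ tr(A²) tr(B²)`; moreover `tr(P (A² ⊗ I)) = 3ⁿ tr(A²)` and
`tr(P (I ⊗ B²)) = 3ⁿ tr(B²)`. (Inequalities of complex numbers are taken with respect to
the partial order of `ℂ`.) -/
theorem swapSum_pairing_bound (n : ℕ) (hn : 1 ≤ n)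
    (A B : Matrix (Fin n → Fin 2) (Fin n → Fin 2) ℂ)
    (hA : A.IsHermitian) (hB : B.IsHermitian) :
    (Matrix.trace (swapSum n * (A ⊗ₖ B))).im = 0 ∧
      (Matrix.trace (swapSum n * (A ⊗ₖ B))) ^ 2
        ≤ (9 : ℂ) ^ n * Matrix.trace (A ^ 2) * Matrix.trace (B ^ 2) ∧
      Matrix.trace (swapSum n * ((A ^ 2) ⊗ₖ (1 : Matrix (Fin n → Fin 2) (Fin n → Fin 2) ℂ)))
        = (3 : ℂ) ^ n * Matrix.trace (A ^ 2) ∧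
      Matrix.trace (swapSum n * ((1 : Matrix (Fin n → Fin 2) (Fin n → Fin 2) ℂ) ⊗ₖ (B ^ 2)))
        = (3 : ℂ) ^ n * Matrix.trace (B ^ 2) :=
  swapSum_pairing_bound_general n A B hA hB
end
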